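/- Let H ∈ ℝ^{N×N} be symmetric positive definite, let D̃ ∈ ℝ^{N×N}, let d_ℓ, d_r ∈ ℝ^N, and suppose the borrowing property D̃ᵀ H D̃ = h γ (d_r d_rᵀ + d_ℓ d_ℓᵀ) + M̃ holds, where h, γ > 0 and M̃ ∈ ℝ^{N×N} is symmetric positive semidefinite. With H_Ω = H ⊗ H, M̃_x = M̃ ⊗ H, M̃_y = H ⊗ M̃, and d_W = −d_ℓ ⊗ I, d_E = d_r ⊗ I, d_S = −I ⊗ d_ℓ, d_N = I ⊗ d_r, it holds for all f, g ∈ ℂ^{N²} that (D̃⊗I f)* H_Ω (D̃⊗I g) + (I⊗D̃ f)* H_Ω (I⊗D̃ g) = f*(M̃_x + M̃_y) g + h γ Σ_{α ∈ {W,S,E,N}} (d_αᵀ f)* H (d_αᵀ g); in particular M̃_x + M̃_y is symmetric positive semidefinite. -/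

import Mathlib

open Matrix Kronecker

/-- Complexification of a real matrix. -/
def cm {m n : Type*} (A : Matrix m n ℝ) : Matrix m n ℂ := A.map (fun r => (r : ℂ))

/-- The Kronecker product `v ⊗ I` of a column vector `v ∈ ℝ^N` with the `N×N` identity,
an `N² × N` matrix. -/
def kronL {N : ℕ} (v : Fin N → ℝ) : Matrix (Fin N × Fin N) (Fin N) ℝ :=
  fun p k => v p.1 * (if p.2 = k then 1 else 0)

/-- The Kronecker product `I ⊗ v` of the `N×N` identity with a column vector `v ∈ ℝ^N`,
an `N² × N` matrix. -/
def kronR {N : ℕ} (v : Fin N → ℝ) : Matrix (Fin N × Fin N) (Fin N) ℝ :=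
  fun p k => (if p.1 = k then 1 else 0) * v p.2

/-! The borrowing identity `D̃ᵀ H D̃ = h γ (d_r d_rᵀ + d_ℓ d_ℓᵀ) + M̃` is tensored with `H`
once in each coordinate direction: `(D̃ ⊗ I)ᵀ (H ⊗ H) (D̃ ⊗ I) = (D̃ᵀ H D̃) ⊗ H`, and
`d d ᵀ ⊗ H = (d ⊗ I) H (d ⊗ I)ᵀ`, so the sum of the two directional Dirichlet forms splits
into `M̃ ⊗ H + H ⊗ M̃` plus the four boundary terms. This is an identity of real matrices;
the complex sesquilinear forms of the statement are its pull-back along `f, g`.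
Positive semidefiniteness is preserved by Kronecker products and sums. -/

section Complexification

variable {m n p : Type*}

lemma cm_mul [Fintype n] (A : Matrix m n ℝ) (B : Matrix n p ℝ) : cm (A * B) = cm A * cm B :=
  Matrix.map_mul (f := Complex.ofRealHom)

lemma cm_add (A B : Matrix m n ℝ) : cm (A + B) = cm A + cm B := by
  ext; simp [cm]

lemma cm_smul (c : ℝ) (A : Matrix m n ℝ) : cm (c • A) = (c : ℂ) • cm A := by
  ext; simp [cm]

lemma cm_transpose (A : Matrix m n ℝ) : (cm A)ᵀ = cm Aᵀ :=
  transpose_map.symm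

lemma conjTranspose_cm (A : Matrix m n ℝ) : (cm A)ᴴ = cm Aᵀ := by
  ext; simp [cm, conjTranspose_apply]

lemma star_mulVec_dotProduct_mulVec_mulVec [Fintype m] [Fintype n] {R : Type*} [CommRing R]
    [StarRing R] (A : Matrix m n R) (B : Matrix m m R) (f g : n → R) :
    star (A *ᵥ f) ⬝ᵥ B *ᵥ (A *ᵥ g) = star f ⬝ᵥ (Aᴴ * B * A) *ᵥ g := by
  simp [star_mulVec, dotProduct_mulVec, vecMul_vecMul, Matrix.mul_assoc]

lemma star_cm_mulVec_dotProduct_cm_mulVec [Fintype m] [Fintype n] (A : Matrix m n ℝ)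
    (B : Matrix m m ℝ) (f g : n → ℂ) :
    star (cm A *ᵥ f) ⬝ᵥ cm B *ᵥ (cm A *ᵥ g) = star f ⬝ᵥ cm (Aᵀ * B * A) *ᵥ g := by
  rw [star_mulVec_dotProduct_mulVec_mulVec, conjTranspose_cm, cm_mul, cm_mul]

end Complexification

section Kronecker

variable {R m n : Type*} [CommSemiring R] [Fintype m] [Fintype n] [DecidableEq n]

lemma kronecker_one_transpose_mul_kronecker_mul (D H : Matrix m m R) (K : Matrix n n R) :
    (D ⊗ₖ (1 : Matrix n n R))ᵀ * (H ⊗ₖ K) * (D ⊗ₖ 1) = (Dᵀ * H * D) ⊗ₖ K := by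
  rw [← kroneckerMap_transpose, transpose_one, ← mul_kronecker_mul, ← mul_kronecker_mul,
    one_mul, mul_one]

lemma one_kronecker_transpose_mul_kronecker_mul (D K : Matrix m m R) (H : Matrix n n R) :
    ((1 : Matrix n n R) ⊗ₖ D)ᵀ * (H ⊗ₖ K) * (1 ⊗ₖ D) = H ⊗ₖ (Dᵀ * K * D) := by
  rw [← kroneckerMap_transpose, transpose_one, ← mul_kronecker_mul, ← mul_kronecker_mul,
    one_mul, mul_one]

end Kronecker

section Boundary

variable {N : ℕ}

lemma kronL_mul_mul_transpose (v : Fin N → ℝ) (H : Matrix (Fin N) (Fin N) ℝ) :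
    kronL v * H * (kronL v)ᵀ = vecMulVec v v ⊗ₖ H := by
  ext p q
  simp only [Matrix.mul_apply, kronL, mul_ite, mul_one, mul_zero, ite_mul, zero_mul,
    Finset.sum_ite_eq, Finset.mem_univ, ↓reduceIte, transpose_apply, vecMulVec,
    kroneckerMap_apply, of_apply]
  ring

lemma kronR_mul_mul_transpose (v : Fin N → ℝ) (H : Matrix (Fin N) (Fin N) ℝ) :
    kronR v * H * (kronR v)ᵀ = H ⊗ₖ vecMulVec v v := by
  ext p q
  simp only [Matrix.mul_apply, kronR, ite_mul, one_mul, zero_mul, Finset.sum_ite_eq,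
    Finset.mem_univ, ↓reduceIte, transpose_apply, mul_ite, mul_zero, vecMulVec,
    kroneckerMap_apply, of_apply]
  ring

lemma kronecker_borrowing (H Dt Mt : Matrix (Fin N) (Fin N) ℝ) (dl dr : Fin N → ℝ) (c : ℝ)
    (hborrow : Dtᵀ * H * Dt = c • (vecMulVec dr dr + vecMulVec dl dl) + Mt) :
    (Dt ⊗ₖ (1 : Matrix (Fin N) (Fin N) ℝ))ᵀ * (H ⊗ₖ H) * (Dt ⊗ₖ 1)
        + ((1 : Matrix (Fin N) (Fin N) ℝ) ⊗ₖ Dt)ᵀ * (H ⊗ₖ H) * (1 ⊗ₖ Dt)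
      = (Mt ⊗ₖ H + H ⊗ₖ Mt)
        + c • (kronL (-dl) * H * (kronL (-dl))ᵀ + kronR (-dl) * H * (kronR (-dl))ᵀ
          + kronL dr * H * (kronL dr)ᵀ + kronR dr * H * (kronR dr)ᵀ) := by
  simp only [kronecker_one_transpose_mul_kronecker_mul, one_kronecker_transpose_mul_kronecker_mul,
    kronL_mul_mul_transpose, kronR_mul_mul_transpose, neg_vecMulVec, vecMulVec_neg, neg_neg,
    hborrow, add_kronecker, kronecker_add, smul_kronecker, kronecker_smul, smul_add]
  abel

end Boundary

theorem stmt6_general {N : ℕ}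
    (H : Matrix (Fin N) (Fin N) ℝ) (hH : H.PosDef)
    (Dt : Matrix (Fin N) (Fin N) ℝ)
    (dl dr : Fin N → ℝ)
    (h γ : ℝ)
    (Mt : Matrix (Fin N) (Fin N) ℝ) (hMt : Mt.PosSemidef)
    (hborrow : Dtᵀ * H * Dt = (h * γ) • (vecMulVec dr dr + vecMulVec dl dl) + Mt)
    (HΩ : Matrix (Fin N × Fin N) (Fin N × Fin N) ℝ) (hHΩ : HΩ = H ⊗ₖ H)
    (Mx My : Matrix (Fin N × Fin N) (Fin N × Fin N) ℝ)
    (hMx : Mx = Mt ⊗ₖ H) (hMy : My = H ⊗ₖ Mt)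
    (dW dE dS dN : Matrix (Fin N × Fin N) (Fin N) ℝ)
    (hdW : dW = kronL (-dl)) (hdE : dE = kronL dr) (hdS : dS = kronR (-dl)) (hdN : dN = kronR dr) :
    (∀ f g : Fin N × Fin N → ℂ,
      (star ((cm (Dt ⊗ₖ (1 : Matrix (Fin N) (Fin N) ℝ))) *ᵥ f) ⬝ᵥ
          (cm HΩ) *ᵥ ((cm (Dt ⊗ₖ (1 : Matrix (Fin N) (Fin N) ℝ))) *ᵥ g))
      + (star ((cm ((1 : Matrix (Fin N) (Fin N) ℝ) ⊗ₖ Dt)) *ᵥ f) ⬝ᵥ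
          (cm HΩ) *ᵥ ((cm ((1 : Matrix (Fin N) (Fin N) ℝ) ⊗ₖ Dt)) *ᵥ g)) =
      star f ⬝ᵥ (cm (Mx + My)) *ᵥ g
      + ((h * γ : ℝ) : ℂ) *
        ((star ((cm dW)ᵀ *ᵥ f) ⬝ᵥ (cm H) *ᵥ ((cm dW)ᵀ *ᵥ g))
          + (star ((cm dS)ᵀ *ᵥ f) ⬝ᵥ (cm H) *ᵥ ((cm dS)ᵀ *ᵥ g))
          + (star ((cm dE)ᵀ *ᵥ f) ⬝ᵥ (cm H) *ᵥ ((cm dE)ᵀ *ᵥ g))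
          + (star ((cm dN)ᵀ *ᵥ f) ⬝ᵥ (cm H) *ᵥ ((cm dN)ᵀ *ᵥ g)))) ∧
    (Mx + My).PosSemidef := by
  subst hHΩ hMx hMy hdW hdE hdS hdN
  refine ⟨fun f g => ?_, (hMt.kronecker hH.posSemidef).add (hH.posSemidef.kronecker hMt)⟩
  simp only [cm_transpose, star_cm_mulVec_dotProduct_cm_mulVec, transpose_transpose]
  rw [← dotProduct_add, ← add_mulVec, ← cm_add, kronecker_borrowing H Dt Mt dl dr _ hborrow]
  simp only [cm_add, cm_smul, add_mulVec, smul_mulVec, dotProduct_add, dotProduct_smul,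
    smul_eq_mul]

/-- The two-dimensional version of the borrowing decomposition: if
`D̃ᵀ H D̃ = h γ (d_r d_rᵀ + d_ℓ d_ℓᵀ) + M̃` with `M̃` symmetric positive semidefinite, then
`(D̃⊗I f)* H_Ω (D̃⊗I g) + (I⊗D̃ f)* H_Ω (I⊗D̃ g)
  = f*(M̃_x + M̃_y) g + h γ Σ_{α∈{W,S,E,N}} (d_αᵀ f)* H (d_αᵀ g)`
for all `f, g ∈ ℂ^{N²}`, where `H_Ω = H ⊗ H`, `M̃_x = M̃ ⊗ H`, `M̃_y = H ⊗ M̃`,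
`d_W = −d_ℓ ⊗ I`, `d_E = d_r ⊗ I`, `d_S = −I ⊗ d_ℓ`, `d_N = I ⊗ d_r`;
in particular `M̃_x + M̃_y` is symmetric positive semidefinite. -/
theorem stmt6 {N : ℕ}
    (H : Matrix (Fin N) (Fin N) ℝ) (hH : H.PosDef) (hHsymm : H.IsSymm)
    (Dt : Matrix (Fin N) (Fin N) ℝ)
    (dl dr : Fin N → ℝ)
    (h γ : ℝ) (hh : 0 < h) (hγ : 0 < γ)
    (Mt : Matrix (Fin N) (Fin N) ℝ) (hMt : Mt.PosSemidef)
    (hborrow : Dtᵀ * H * Dt = (h * γ) • (vecMulVec dr dr + vecMulVec dl dl) + Mt)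
    (HΩ : Matrix (Fin N × Fin N) (Fin N × Fin N) ℝ) (hHΩ : HΩ = H ⊗ₖ H)
    (Mx My : Matrix (Fin N × Fin N) (Fin N × Fin N) ℝ)
    (hMx : Mx = Mt ⊗ₖ H) (hMy : My = H ⊗ₖ Mt)
    (dW dE dS dN : Matrix (Fin N × Fin N) (Fin N) ℝ)
    (hdW : dW = kronL (-dl)) (hdE : dE = kronL dr) (hdS : dS = kronR (-dl)) (hdN : dN = kronR dr) :
    (∀ f g : Fin N × Fin N → ℂ,
      (star ((cm (Dt ⊗ₖ (1 : Matrix (Fin N) (Fin N) ℝ))) *ᵥ f) ⬝ᵥ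
          (cm HΩ) *ᵥ ((cm (Dt ⊗ₖ (1 : Matrix (Fin N) (Fin N) ℝ))) *ᵥ g))
      + (star ((cm ((1 : Matrix (Fin N) (Fin N) ℝ) ⊗ₖ Dt)) *ᵥ f) ⬝ᵥ
          (cm HΩ) *ᵥ ((cm ((1 : Matrix (Fin N) (Fin N) ℝ) ⊗ₖ Dt)) *ᵥ g)) =
      star f ⬝ᵥ (cm (Mx + My)) *ᵥ g
      + ((h * γ : ℝ) : ℂ) *
        ((star ((cm dW)ᵀ *ᵥ f) ⬝ᵥ (cm H) *ᵥ ((cm dW)ᵀ *ᵥ g))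
          + (star ((cm dS)ᵀ *ᵥ f) ⬝ᵥ (cm H) *ᵥ ((cm dS)ᵀ *ᵥ g))
          + (star ((cm dE)ᵀ *ᵥ f) ⬝ᵥ (cm H) *ᵥ ((cm dE)ᵀ *ᵥ g))
          + (star ((cm dN)ᵀ *ᵥ f) ⬝ᵥ (cm H) *ᵥ ((cm dN)ᵀ *ᵥ g)))) ∧
    (Mx + My).PosSemidef :=
  stmt6_general H hH Dt dl dr h γ Mt hMt hborrow HΩ hHΩ Mx My hMx hMy dW dE dS dN hdW hdE hdS hdN
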